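/- Let k ≥ 0, l ≥ 1, a ≥ 1, b ≥ 2 with k+3l = a+2b. Then K^{-1}_{(1^k,3^l),(1^a,2^b)} = −K^{-1}_{(1^k,3^{l−1}),(1^{a−1},2^{b−1})} − K^{-1}_{(1^k,3^{l−1}),(1^{a+1},2^{b−2})}, where all three inverse Kostka numbers concern partitions of the appropriate common weights (k+3l on the left, k+3(l−1) on the right). -/

import Mathlib

open Finset MvPolynomial

/-- The `p`-th entry of an `n`-tuple, with default value `0` out of range. -/
def nth (n : ℕ) (f : Fin n → ℕ) (p : ℕ) : ℕ := if h : p < n then f ⟨p, h⟩ else 0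

/-- `a_α = det (x_j ^ α_i)`. -/
noncomputable def aDet (n : ℕ) (α : Fin n → ℕ) : MvPolynomial (Fin n) ℤ :=
  (Matrix.of fun i j : Fin n => (X j : MvPolynomial (Fin n) ℤ) ^ α i).det

/-- `x ^ β = ∏ x_i ^ β_i`. -/
noncomputable def xpow (n : ℕ) (β : Fin n → ℕ) : MvPolynomial (Fin n) ℤ :=
  ∏ i, X i ^ β i

/-- The monomial symmetric polynomial `m_lam(n) = Σ_{w ∈ Sₙ^lam} x^{w(lam)}`:
the sum of `x^β` over all distinct rearrangements `β` of `lam`. -/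
noncomputable def msym (n : ℕ) (lam : Fin n → ℕ) : MvPolynomial (Fin n) ℤ :=
  ∑ β ∈ Finset.univ.image (fun σ : Equiv.Perm (Fin n) => lam ∘ σ), xpow n β

/-- `δ(n) = (0, 1, …, n-1)`. -/
def deltaN (n : ℕ) : Fin n → ℕ := fun i => (i : ℕ)

/-- `P(m∣n)`: partitions of `m` as nondecreasing `n`-tuples (zeros at the beginning). -/
def Par (n m : ℕ) : Finset (Fin n → ℕ) :=
  (Fintype.piFinset fun _ : Fin n => Finset.range (m + 1)).filter
    fun μ => (∀ i j : Fin n, i ≤ j → μ i ≤ μ j) ∧ ∑ i, μ i = m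

/-- `K` is the inverse Kostka matrix in `n` variables: for every weight `m` and
every `lam ∈ P(m∣n)`, `m_lam(n) · a_{δ(n)} = Σ_{μ ∈ P(m∣n)} K lam μ · a_{μ+δ(n)}`
(equivalently `m_lam(n) = Σ_μ K lam μ · s_μ(n)`). -/
def IsInvKostka (n : ℕ) (K : (Fin n → ℕ) → (Fin n → ℕ) → ℤ) : Prop :=
  ∀ m : ℕ, ∀ lam ∈ Par n m,
    msym n lam * aDet n (deltaN n) =
      ∑ μ ∈ Par n m, C (K lam μ) * aDet n (fun i => μ i + (i : ℕ))

/-- The partition `(1^a, 2^b, 3^c)` as a nondecreasing `n`-tuple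
(requires `a + b + c ≤ n`). -/
def tuple3 (n a b c : ℕ) : Fin n → ℕ :=
  fun i => if (i : ℕ) < n - a - b - c then 0
    else if (i : ℕ) < n - b - c then 1
    else if (i : ℕ) < n - c then 2 else 3

/-!
Write `X = X 0`, `Y = X 1` and let `T` be the lower triangular band matrix with `1`, `X`, `Y` on
the diagonals `0`, `1`, `3`. For `λ = (1^k, 3^l)`, `m_λ · a_δ` is the `X^k Y^l`-coefficient of
`∏ᵢ (1 + X xᵢ + Y xᵢ³) · a_δ`, so `K⁻¹_{λ,μ}` is the `X^k Y^l`-coefficient of the minor of `T`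
on the rows `μ + δ(n)` and the first `n` columns. For `μ = (1^a, 2^b)` these rows are
`{0, …, n+1}` with two indices `p < q` removed. Bordering that minor with the unit columns `e_p`,
`e_q` and multiplying by `T⁻¹` (Jacobi's complementary minor identity) turns it into a `2 × 2`
determinant in the coefficients of `1 / (1 + X t + Y t³)`. Their three-term recurrence gives
`M(p, q) + Y M(p+2, q+1) + Y M(p+1, q+2) = 0`, whose `X^k Y^l`-coefficient is the theorem.
-/

namespace InverseKostka

def skip (p i : ℕ) : ℕ := if i < p then i else i + 1

lemma val_succAbove_eq_skip {m : ℕ} (c : Fin (m + 1)) (i : Fin m) :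
    (c.succAbove i : ℕ) = skip c i := by
  unfold skip Fin.succAbove
  split_ifs <;> simp_all [Fin.lt_def]

section Band

variable {R : Type*} [CommRing R] (x y : R)

def band (u w : ℕ) : R :=
  if u = w then 1 else if u = w + 1 then x else if u = w + 3 then y else 0

/-- The coefficients of `1 / (1 + x t + y t ^ 3)`. -/
def bandInvSeq : ℕ → R
  | 0 => 1
  | 1 => -x
  | 2 => x ^ 2
  | r + 3 => -x * bandInvSeq (r + 2) - y * bandInvSeq r

def bandInv (u w : ℕ) : R := if w ≤ u then bandInvSeq x y (u - w) else 0

lemma bandInv_of_lt {u w : ℕ} (h : u < w) : bandInv x y u w = 0 := if_neg (by omega)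

lemma bandInv_succ_succ (u w : ℕ) : bandInv x y (u + 1) (w + 1) = bandInv x y u w := by
  simp [bandInv]

lemma bandInv_add_mul_add_mul (u w : ℕ) :
    bandInv x y u w + x * bandInv x y u (w + 1) + y * bandInv x y u (w + 3) =
      if u = w then 1 else 0 := by
  rcases lt_or_ge u w with h | h
  · rw [bandInv_of_lt x y h, bandInv_of_lt x y (by omega), bandInv_of_lt x y (by omega),
      if_neg h.ne]
    ring
  obtain ⟨r, rfl⟩ := Nat.exists_eq_add_of_le h
  simp only [bandInv, Nat.add_sub_cancel_left]
  rcases r with _ | _ | _ | r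
  · simp [bandInvSeq]
  · simp [bandInvSeq]
  · simp [bandInvSeq]
    ring
  · simp [show w + 3 ≤ w + (r + 3) by omega, show w + (r + 3) - (w + 1) = r + 2 by omega,
      show w + (r + 3) - (w + 3) = r by omega, bandInvSeq]
    ring

lemma sum_bandInv_mul_band {N i j : ℕ} (hi : i < N) (hj : j + 2 < N) :
    ∑ v ∈ Finset.range N, bandInv x y i v * band x y v j = if i = j then 1 else 0 := by
  have hsplit : ∀ v, bandInv x y i v * band x y v j =
      (if v = j then bandInv x y i j else 0) + (if v = j + 1 then x * bandInv x y i (j + 1) else 0)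
        + (if v = j + 3 then y * bandInv x y i (j + 3) else 0) := by
    intro v
    unfold band
    split_ifs <;> subst_vars <;> first | omega | ring
  simp only [hsplit, Finset.sum_add_distrib, Finset.sum_ite_eq', Finset.mem_range]
  rw [if_pos (show j < N by omega), if_pos (show j + 1 < N by omega), ← bandInv_add_mul_add_mul]
  by_cases h : j + 3 < N
  · rw [if_pos h]
  · rw [if_neg h, bandInv_of_lt x y (show i < j + 3 by omega), mul_zero]

lemma sum_bandInv_mul_ite {N i : ℕ} (hi : i < N) (p : ℕ) :
    ∑ v ∈ Finset.range N, bandInv x y i v * (if v = p then 1 else 0) = bandInv x y i p := by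
  simp only [mul_ite, mul_one, mul_zero, Finset.sum_ite_eq', Finset.mem_range]
  split_ifs with hp
  · rfl
  · rw [bandInv_of_lt x y (by omega)]

def bandRows {n : ℕ} (v : Fin n → ℕ) : Matrix (Fin n) (Fin n) R :=
  Matrix.of fun i j => band x y (v i) j

def bordered (n p q : ℕ) : Matrix (Fin (n + 2)) (Fin (n + 2)) R :=
  Matrix.of fun i j => if (j : ℕ) < n then band x y i j
    else if (j : ℕ) = n then (if (i : ℕ) = p then 1 else 0) else if (i : ℕ) = q then 1 else 0

def bandInvMatrix (N : ℕ) : Matrix (Fin N) (Fin N) R := Matrix.of fun i j => bandInv x y i j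

lemma det_bandInvMatrix (N : ℕ) : (bandInvMatrix x y N).det = 1 := by
  rw [Matrix.det_of_isLowerTriangular (bandInvMatrix x y N) fun i j hij => bandInv_of_lt x y hij]
  exact Finset.prod_eq_one fun i _ => by simp [bandInvMatrix, bandInv, bandInvSeq]

lemma bandInvMatrix_mul_bordered_apply (n p q : ℕ) (i j : Fin (n + 2)) :
    (bandInvMatrix x y (n + 2) * bordered x y n p q) i j =
      if (j : ℕ) < n then (if (i : ℕ) = j then 1 else 0)
      else if (j : ℕ) = n then bandInv x y i p else bandInv x y i q := by
  have hrange : ∀ f : ℕ → R, ∑ v : Fin (n + 2), bandInv x y i v * f v =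
      ∑ v ∈ Finset.range (n + 2), bandInv x y i v * f v :=
    fun f => Fin.sum_univ_eq_sum_range (fun v => bandInv x y i v * f v) _
  simp only [Matrix.mul_apply, bandInvMatrix, bordered, Matrix.of_apply]
  by_cases hj : (j : ℕ) < n
  · simp only [hj, ↓reduceIte]
    rw [hrange (band x y · j), sum_bandInv_mul_band x y i.isLt (by omega)]
  by_cases hjn : (j : ℕ) = n
  · simp only [hjn, lt_irrefl, ↓reduceIte]
    rw [hrange (if · = p then 1 else 0), sum_bandInv_mul_ite x y i.isLt]
  · simp only [hj, hjn, ↓reduceIte]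
    rw [hrange (if · = q then 1 else 0), sum_bandInv_mul_ite x y i.isLt]

lemma det_bordered (n p q : ℕ) :
    (bordered x y n p q).det =
      bandInv x y n p * bandInv x y (n + 1) q - bandInv x y n q * bandInv x y (n + 1) p := by
  have hblocks : (bandInvMatrix x y (n + 2) * bordered x y n p q).submatrix
      finSumFinEquiv finSumFinEquiv =
      Matrix.fromBlocks 1 (Matrix.of fun (i : Fin n) (t : Fin 2) => bandInv x y i (![p, q] t)) 0
        (Matrix.of fun s t : Fin 2 => bandInv x y (n + s) (![p, q] t)) := by
    ext i j
    rcases i with i | s <;> rcases j with j | t <;> try fin_cases t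
    all_goals simp [bandInvMatrix_mul_bordered_apply, Matrix.one_apply, Fin.ext_iff]
    omega
  rw [← one_mul (bordered x y n p q).det, ← det_bandInvMatrix x y (n + 2), ← Matrix.det_mul,
    ← Matrix.det_submatrix_equiv_self finSumFinEquiv, hblocks, Matrix.det_fromBlocks_zero₂₁,
    Matrix.det_one, one_mul, Matrix.det_fin_two]
  simp

lemma det_bordered_eq_det_bandRows {n p q : ℕ} (hpq : p < q) (hq : q ≤ n + 1) :
    (bordered x y n p q).det =
      (-1) ^ (p + q + 1) * (bandRows x y fun i : Fin n => skip q (skip p i)).det := by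
  -- Laplace expansion along the column `e_q`, then along `e_p`.
  rw [Matrix.det_succ_column _ (Fin.last (n + 1)),
    Finset.sum_eq_single (⟨q, by omega⟩ : Fin (n + 2)), Matrix.det_succ_column _ (Fin.last n),
    Finset.sum_eq_single (⟨p, by omega⟩ : Fin (n + 1))]
  · have hminor : (((bordered x y n p q).submatrix (Fin.succAbove ⟨q, by omega⟩)
        (Fin.last (n + 1)).succAbove).submatrix (Fin.succAbove ⟨p, by omega⟩)
        (Fin.last n).succAbove) = bandRows x y fun i : Fin n => skip q (skip p i) := by
      ext i j
      simp [bordered, bandRows, val_succAbove_eq_skip]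
    have hsign : (-1 : R) ^ (q + (n + 1)) * (-1) ^ (p + n) = (-1) ^ (p + q + 1) := by
      rw [← pow_add, show q + (n + 1) + (p + n) = p + q + 1 + 2 * n by ring, pow_add, pow_mul]
      simp
    rw [hminor, ← hsign]
    simp [bordered, val_succAbove_eq_skip, skip, hpq]
    ring
  · intro i _ hi
    simp [bordered, val_succAbove_eq_skip, skip, Fin.ext_iff] at hi ⊢
    intro h
    split_ifs at h <;> omega
  · simp
  · intro i _ hi
    simp [bordered, Fin.ext_iff] at hi ⊢
    exact fun h => absurd h hi
  · simp

lemma det_bandRows_skip_skip {n p q : ℕ} (hpq : p < q) (hq : q ≤ n + 1) :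
    (bandRows x y fun i : Fin n => skip q (skip p i)).det = (-1) ^ (p + q + 1) *
      (bandInv x y n p * bandInv x y (n + 1) q - bandInv x y n q * bandInv x y (n + 1) p) := by
  rw [← det_bordered, det_bordered_eq_det_bandRows x y hpq hq, ← mul_assoc, ← pow_add,
    Even.neg_one_pow ⟨_, rfl⟩, one_mul]

lemma det_bandRows_skip_skip_add {n p q : ℕ} (hpq : p + 1 < q) (hqn : q + 1 ≤ n) :
    (bandRows x y fun i : Fin n => skip q (skip p i)).det
      + y * (bandRows x y fun i : Fin n => skip (q + 1) (skip (p + 2) i)).det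
      + y * (bandRows x y fun i : Fin n => skip (q + 2) (skip (p + 1) i)).det = 0 := by
  have hp := bandInv_add_mul_add_mul x y (n + 1) p
  have hq := bandInv_add_mul_add_mul x y (n + 1) q
  rw [if_neg (by omega)] at hp hq
  rw [det_bandRows_skip_skip x y (by omega) (by omega),
    det_bandRows_skip_skip x y (by omega) (by omega),
    det_bandRows_skip_skip x y (by omega) (by omega), ← bandInv_succ_succ x y n p,
    ← bandInv_succ_succ x y n q, ← bandInv_succ_succ x y n (p + 2),
    ← bandInv_succ_succ x y n (q + 1), ← bandInv_succ_succ x y n (p + 1),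
    ← bandInv_succ_succ x y n (q + 2)]
  linear_combination (-1 : R) ^ (p + q + 1) *
    (bandInv x y (n + 1) (p + 1) * hq - bandInv x y (n + 1) (q + 1) * hp)

lemma prod_band_add {ι : Type*} [Fintype ι] (β w : ι → ℕ)
    (hβ : ∀ i, β i = 0 ∨ β i = 1 ∨ β i = 3) :
    ∏ i, band x y (β i + w i) (w i) = x ^ #{i | β i = 1} * y ^ #{i | β i = 3} := by
  have hfactor : ∀ i, band x y (β i + w i) (w i) =
      x ^ (if β i = 1 then 1 else 0) * y ^ (if β i = 3 then 1 else 0) := by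
    intro i
    rcases hβ i with h | h | h <;> simp [band, h, add_comm]
  rw [Finset.prod_congr rfl fun i _ => hfactor i, Finset.prod_mul_distrib,
    Finset.prod_pow_eq_pow_sum, Finset.prod_pow_eq_pow_sum, card_filter, card_filter]

end Band

lemma coeff_X_zero_pow_mul_X_one_pow (a c k l : ℕ) :
    coeff (Finsupp.single 0 k + Finsupp.single 1 l) (X 0 ^ a * X 1 ^ c : MvPolynomial (Fin 2) ℤ) =
      if a = k ∧ c = l then 1 else 0 := by
  rw [X_pow_eq_monomial, X_pow_eq_monomial, monomial_mul, one_mul, coeff_monomial]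
  simp [Finsupp.ext_iff, Fin.forall_fin_two]

lemma coeff_X_one_mul {k l : ℕ} (hl : 1 ≤ l) (P : MvPolynomial (Fin 2) ℤ) :
    coeff (Finsupp.single 0 k + Finsupp.single 1 l) (X 1 * P) =
      coeff (Finsupp.single 0 k + Finsupp.single 1 (l - 1)) P := by
  obtain ⟨l, rfl⟩ := Nat.exists_eq_add_of_le' hl
  rw [Nat.add_sub_cancel, Finsupp.single_add, ← add_assoc, add_comm, coeff_X_mul]

section Tuple

variable {n : ℕ}

lemma sum_ite_val_lt (t : ℕ) : ∑ i : Fin n, (if (i : ℕ) < t then 1 else 0) = min n t := by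
  rw [← Finset.card_filter, Fin.card_filter_val_lt]

lemma tuple3_mem_Par {a b c : ℕ} (h : a + b + c ≤ n) :
    tuple3 n a b c ∈ Par n (a + 2 * b + 3 * c) := by
  have hsum : ∀ i : Fin n, tuple3 n a b c i + (if (i : ℕ) < n - a - b - c then 1 else 0)
      + (if (i : ℕ) < n - b - c then 1 else 0) + (if (i : ℕ) < n - c then 1 else 0) = 3 := by
    intro i
    unfold tuple3
    split_ifs <;> omega
  have htotal := Finset.sum_congr rfl fun i (_ : i ∈ Finset.univ) => hsum i
  simp only [Finset.sum_add_distrib, sum_ite_val_lt, Finset.sum_const, Finset.card_univ,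
    Fintype.card_fin, smul_eq_mul] at htotal
  simp only [Par, Finset.mem_filter, Fintype.mem_piFinset, Finset.mem_range]
  refine ⟨fun i => ?_, fun i j hij => ?_, by omega⟩
  · have := i.isLt
    unfold tuple3
    split_ifs <;> omega
  · have : (i : ℕ) ≤ j := hij
    unfold tuple3
    split_ifs <;> omega

lemma tuple3_add_val {a b p : ℕ} (hp : p + a + b = n) (i : Fin n) :
    tuple3 n a b 0 i + i = skip (p + a + 1) (skip p i) := by
  unfold tuple3 skip
  split_ifs <;> omega

variable {k l : ℕ}

lemma tuple3_values (i : Fin n) :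
    tuple3 n k 0 l i = 0 ∨ tuple3 n k 0 l i = 1 ∨ tuple3 n k 0 l i = 3 := by
  unfold tuple3
  split_ifs <;> omega

lemma card_tuple3_eq_one (hkl : k + l ≤ n) : #{i | tuple3 n k 0 l i = 1} = k := by
  have hsum : ∀ i : Fin n, (if tuple3 n k 0 l i = 1 then 1 else 0)
      + (if (i : ℕ) < n - k - 0 - l then 1 else 0) = (if (i : ℕ) < n - 0 - l then 1 else 0) := by
    intro i
    have := i.isLt
    unfold tuple3
    split_ifs <;> first | contradiction | omega
  have htotal := Finset.sum_congr rfl fun i (_ : i ∈ Finset.univ) => hsum i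
  rw [Finset.sum_add_distrib, sum_ite_val_lt, sum_ite_val_lt, ← Finset.card_filter] at htotal
  omega

lemma card_tuple3_eq_three (hkl : k + l ≤ n) : #{i | tuple3 n k 0 l i = 3} = l := by
  have hsum : ∀ i : Fin n, (if tuple3 n k 0 l i = 3 then 1 else 0)
      + (if (i : ℕ) < n - 0 - l then 1 else 0) = 1 := by
    intro i
    have := i.isLt
    unfold tuple3
    split_ifs <;> first | contradiction | omega
  have htotal := Finset.sum_congr rfl fun i (_ : i ∈ Finset.univ) => hsum i
  rw [Finset.sum_add_distrib, sum_ite_val_lt, ← Finset.card_filter, Finset.sum_const,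
    Finset.card_univ, Fintype.card_fin, smul_eq_mul, mul_one] at htotal
  omega

lemma card_eq_zero_add_card_eq_one_add_card_eq_three {f : Fin n → ℕ}
    (hf : ∀ i, f i = 0 ∨ f i = 1 ∨ f i = 3) :
    #{i | f i = 0} + #{i | f i = 1} + #{i | f i = 3} = n := by
  rw [Finset.card_filter, Finset.card_filter, Finset.card_filter, ← Finset.sum_add_distrib,
    ← Finset.sum_add_distrib, Finset.sum_congr rfl fun i _ => ?_, Finset.sum_const,
    Finset.card_univ, Fintype.card_fin, smul_eq_mul, mul_one]
  rcases hf i with h | h | h <;> simp [h]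

lemma mem_image_comp_perm_of_card_fiber_eq {α : Type*} [DecidableEq α] {lam β : Fin n → α}
    (h : ∀ c, #{i | β i = c} = #{i | lam i = c}) :
    β ∈ Finset.univ.image fun σ : Equiv.Perm (Fin n) => lam ∘ σ := by
  have hcard (c : α) : Fintype.card {i // β i = c} = Fintype.card {i // lam i = c} := by
    rw [Fintype.card_subtype, Fintype.card_subtype, h c]
  let σ : Equiv.Perm (Fin n) := (Equiv.sigmaFiberEquiv β).symm.trans
    ((Equiv.sigmaCongrRight fun c => Fintype.equivOfCardEq (hcard c)).trans
      (Equiv.sigmaFiberEquiv lam))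
  exact Finset.mem_image.2 ⟨σ, Finset.mem_univ _,
    _root_.funext fun i => (Fintype.equivOfCardEq (hcard (β i)) ⟨i, rfl⟩).2⟩

lemma mem_image_tuple3_iff (hkl : k + l ≤ n) {β : Fin n → ℕ}
    (hβ : ∀ i, β i = 0 ∨ β i = 1 ∨ β i = 3) :
    β ∈ Finset.univ.image (fun σ : Equiv.Perm (Fin n) => tuple3 n k 0 l ∘ σ) ↔
      #{i | β i = 1} = k ∧ #{i | β i = 3} = l := by
  have hfiber (c : ℕ) (σ : Equiv.Perm (Fin n)) :
      #{i | (tuple3 n k 0 l ∘ σ) i = c} = #{i | tuple3 n k 0 l i = c} :=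
    Finset.card_equiv σ fun i => by simp
  constructor
  · intro hmem
    obtain ⟨σ, -, rfl⟩ := Finset.mem_image.1 hmem
    rw [hfiber, hfiber, card_tuple3_eq_one hkl, card_tuple3_eq_three hkl]
    exact ⟨rfl, rfl⟩
  rintro ⟨h1, h3⟩
  refine mem_image_comp_perm_of_card_fiber_eq fun c => ?_
  have hβ0 := card_eq_zero_add_card_eq_one_add_card_eq_three hβ
  have hlam0 :=
    card_eq_zero_add_card_eq_one_add_card_eq_three (tuple3_values (n := n) (k := k) (l := l))
  have hlam1 := card_tuple3_eq_one (n := n) hkl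
  have hlam3 := card_tuple3_eq_three (n := n) hkl
  by_cases hc : c = 0 ∨ c = 1 ∨ c = 3
  · rcases hc with rfl | rfl | rfl <;> omega
  · rw [Finset.filter_false_of_mem, Finset.filter_false_of_mem]
    · intro i _ hi
      rcases tuple3_values (k := k) (l := l) i with h | h | h <;> omega
    · intro i _ hi
      rcases hβ i with h | h | h <;> omega

lemma sum_image_tuple3_ite_eq_coeff_prod_band (hkl : k + l ≤ n) (v w : Fin n → ℕ) :
    (∑ β ∈ Finset.univ.image (fun σ : Equiv.Perm (Fin n) => tuple3 n k 0 l ∘ σ),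
        if β + w = v then (1 : ℤ) else 0) =
      coeff (Finsupp.single 0 k + Finsupp.single 1 l)
        (∏ i, band (X 0 : MvPolynomial (Fin 2) ℤ) (X 1) (v i) (w i)) := by
  -- Only `β = v - w` can contribute, on both sides, and only if its entries lie in `{0, 1, 3}`.
  by_cases H : ∃ β : Fin n → ℕ, (∀ i, β i = 0 ∨ β i = 1 ∨ β i = 3) ∧ β + w = v
  · obtain ⟨β, hβ, rfl⟩ := H
    simp only [add_left_inj, Finset.sum_ite_eq', Pi.add_apply]
    rw [prod_band_add _ _ β w hβ, coeff_X_zero_pow_mul_X_one_pow]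
    exact if_congr (mem_image_tuple3_iff hkl hβ) rfl rfl
  · obtain ⟨i, hi⟩ : ∃ i, band (X 0 : MvPolynomial (Fin 2) ℤ) (X 1) (v i) (w i) = 0 := by
      by_contra! hne
      refine H ⟨fun i => v i - w i, fun i => ?_, funext fun i => ?_⟩ <;>
      · have := hne i
        simp only [band, Pi.add_apply] at this ⊢
        split_ifs at this <;> first | omega | contradiction
    rw [Finset.prod_eq_zero (Finset.mem_univ i) hi, coeff_zero]
    refine Finset.sum_eq_zero fun β hβ => if_neg fun h => H ⟨β, ?_, h⟩
    obtain ⟨σ, -, rfl⟩ := Finset.mem_image.1 hβ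
    exact fun i => tuple3_values (σ i)

end Tuple

section Alternant

variable {n : ℕ}

lemma xpow_eq_monomial (β : Fin n → ℕ) :
    xpow n β = monomial (Finsupp.equivFunOnFinite.symm β) 1 := by
  rw [monomial_eq, C_1, one_mul, Finsupp.prod_fintype _ _ fun i => pow_zero (X i)]
  rfl

lemma xpow_add (β γ : Fin n → ℕ) : xpow n (β + γ) = xpow n β * xpow n γ := by
  simp only [xpow, Pi.add_apply, pow_add, Finset.prod_mul_distrib]

lemma coeff_xpow (β v : Fin n → ℕ) :
    coeff (Finsupp.equivFunOnFinite.symm v) (xpow n β) = if β = v then 1 else 0 := by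
  simp [xpow_eq_monomial, coeff_monomial]

lemma aDet_eq_sum (α : Fin n → ℕ) :
    aDet n α = ∑ σ : Equiv.Perm (Fin n), Equiv.Perm.sign σ • xpow n (α ∘ σ) := by
  rw [aDet, Matrix.det_apply]
  rfl

lemma coeff_aDet_of_strictMono {α β : Fin n → ℕ} (hα : StrictMono α) (hβ : StrictMono β) :
    coeff (Finsupp.equivFunOnFinite.symm β) (aDet n α) = if α = β then 1 else 0 := by
  have hperm : ∀ σ : Equiv.Perm (Fin n), α ∘ σ = β → σ = 1 := by
    intro σ h
    subst h
    have hσ : StrictMono σ := fun i j hij => hα.lt_iff_lt.1 (hβ hij)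
    exact Equiv.ext fun i => hσ.apply_eq
  rw [aDet_eq_sum, coeff_sum, Finset.sum_eq_single 1]
  · simp [coeff_xpow]
  · intro σ _ hσ
    rw [coeff_smul, coeff_xpow, if_neg (mt (hperm σ) hσ), smul_zero]
  · simp

lemma strictMono_add_val {μ : Fin n → ℕ} (hμ : Monotone μ) :
    StrictMono fun i : Fin n => μ i + (i : ℕ) :=
  hμ.add_strictMono Fin.val_strictMono

lemma monotone_of_mem_Par {m : ℕ} {μ : Fin n → ℕ} (h : μ ∈ Par n m) : Monotone μ :=
  fun i j hij => (Finset.mem_filter.1 h).2.1 i j hij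

lemma coeff_msym_tuple3_mul_aDet {k l : ℕ} (hkl : k + l ≤ n) (v : Fin n → ℕ) :
    coeff (Finsupp.equivFunOnFinite.symm v) (msym n (tuple3 n k 0 l) * aDet n (deltaN n)) =
      coeff (Finsupp.single 0 k + Finsupp.single 1 l)
        (bandRows (X 0 : MvPolynomial (Fin 2) ℤ) (X 1) v).det := by
  rw [← Matrix.det_transpose, Matrix.det_apply, coeff_sum, msym, Finset.sum_mul, coeff_sum]
  simp_rw [aDet_eq_sum, Finset.mul_sum, coeff_sum, mul_smul_comm, ← xpow_add, coeff_smul,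
    coeff_xpow]
  rw [Finset.sum_comm]
  refine Finset.sum_congr rfl fun σ _ => ?_
  rw [← Finset.smul_sum, sum_image_tuple3_ite_eq_coeff_prod_band hkl]
  rfl

end Alternant

end InverseKostka

open InverseKostka

namespace IsInvKostka

lemma apply_eq_coeff {n : ℕ} {K : (Fin n → ℕ) → (Fin n → ℕ) → ℤ} (hK : IsInvKostka n K)
    {m : ℕ} {lam μ : Fin n → ℕ} (hlam : lam ∈ Par n m) (hμ : μ ∈ Par n m) :
    K lam μ = coeff (Finsupp.equivFunOnFinite.symm fun i => μ i + (i : ℕ))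
      (msym n lam * aDet n (deltaN n)) := by
  rw [hK m lam hlam, coeff_sum, Finset.sum_eq_single μ]
  · rw [coeff_C_mul, coeff_aDet_of_strictMono (strictMono_add_val (monotone_of_mem_Par hμ))
      (strictMono_add_val (monotone_of_mem_Par hμ)), if_pos rfl, mul_one]
  · intro ν hν hνμ
    rw [coeff_C_mul, coeff_aDet_of_strictMono (strictMono_add_val (monotone_of_mem_Par hν))
      (strictMono_add_val (monotone_of_mem_Par hμ)), if_neg, mul_zero]
    exact fun h => hνμ (funext fun i => by simpa using congrFun h i)
  · exact fun h => absurd hμ h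

lemma apply_tuple3 {n : ℕ} {K : (Fin n → ℕ) → (Fin n → ℕ) → ℤ}
    (hK : IsInvKostka n K) {k l a b p q : ℕ} (hw : k + 3 * l = a + 2 * b) (hkl : k + l ≤ n)
    (hp : p + a + b = n) (hq : p + a + 1 = q) :
    K (tuple3 n k 0 l) (tuple3 n a b 0) = coeff (Finsupp.single 0 k + Finsupp.single 1 l)
      (bandRows (X 0 : MvPolynomial (Fin 2) ℤ) (X 1) fun i : Fin n => skip q (skip p i)).det := by
  have hlam := tuple3_mem_Par (n := n) (a := k) (b := 0) (c := l) (by omega)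
  have hμ := tuple3_mem_Par (n := n) (a := a) (b := b) (c := 0) (by omega)
  rw [mul_zero, add_zero] at hlam hμ
  rw [← hw] at hμ
  rw [hK.apply_eq_coeff hlam hμ, coeff_msym_tuple3_mul_aDet hkl, ← hq]
  simp only [tuple3_add_val hp]

end IsInvKostka

/-- The recurrence `K⁻¹_{(1^k,3^l),(1^a,2^b)} = -K⁻¹_{(1^k,3^{l-1}),(1^{a-1},2^{b-1})}
- K⁻¹_{(1^k,3^{l-1}),(1^{a+1},2^{b-2})}` for `l ≥ 1`, `a ≥ 1`, `b ≥ 2`. -/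
theorem stmt17 (n k l a b : ℕ) (hl : 1 ≤ l) (ha : 1 ≤ a) (hb : 2 ≤ b)
    (hw : k + 3 * l = a + 2 * b) (hn : k + 3 * l ≤ n)
    (K : (Fin n → ℕ) → (Fin n → ℕ) → ℤ) (hK : IsInvKostka n K) :
    K (tuple3 n k 0 l) (tuple3 n a b 0)
      = -K (tuple3 n k 0 (l - 1)) (tuple3 n (a - 1) (b - 1) 0)
        - K (tuple3 n k 0 (l - 1)) (tuple3 n (a + 1) (b - 2) 0) := by
  obtain ⟨z, hz⟩ : ∃ z, z + a + b = n := ⟨n - a - b, by omega⟩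
  have hrec := det_bandRows_skip_skip_add (X 0 : MvPolynomial (Fin 2) ℤ) (X 1)
    (n := n) (p := z) (q := z + a + 1) (by omega) (by omega)
  rw [hK.apply_tuple3 hw (by omega) hz rfl,
    hK.apply_tuple3 (p := z + 2) (q := z + a + 1 + 1) (by omega) (by omega) (by omega) (by omega),
    hK.apply_tuple3 (p := z + 1) (q := z + a + 1 + 2) (by omega) (by omega) (by omega) (by omega),
    ← coeff_X_one_mul hl, ← coeff_X_one_mul hl, ← coeff_neg, ← coeff_sub]
  congr 1
  linear_combination hrec
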